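/- If f : ℝ² → ℝ has the form f(x) = P(x) e^{-π|x|²} with P a real polynomial, then its two-sided quaternion Fourier transform has the form 𝓕{f}(ξ) = Q(ξ) e^{-π|ξ|²} where Q is a polynomial with quaternion coefficients of the same degree as P. -/

import Mathlib

open MeasureTheory Real

noncomputable section

abbrev ℍ : Type := Quaternion ℝ
def Qi : ℍ := ⟨0,1,0,0⟩
def Qj : ℍ := ⟨0,0,1,0⟩

/-- e^{iθ} as a quaternion. -/
def expI (θ : ℝ) : ℍ := ⟨Real.cos θ, Real.sin θ, 0, 0⟩
/-- e^{jθ} as a quaternion. -/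
def expJ (θ : ℝ) : ℍ := ⟨Real.cos θ, 0, Real.sin θ, 0⟩

/-- The two-sided quaternion Fourier transform. -/
def QFT (f : ℝ × ℝ → ℍ) (ξ : ℝ × ℝ) : ℍ :=
  ∫ x : ℝ × ℝ, expI (-(2 * π * ξ.1 * x.1)) * f x * expJ (-(2 * π * ξ.2 * x.2))

/-- Euclidean norm on ℝ². -/
def enorm2 (x : ℝ × ℝ) : ℝ := Real.sqrt (x.1 ^ 2 + x.2 ^ 2)

/-- The m-th real component of f, viewed as a quaternion-valued function. -/
def qcomp (f : ℝ × ℝ → ℍ) (m : Fin 4) : ℝ × ℝ → ℍ :=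
  fun x => match m with
  | 0 => ((f x).re : ℍ) | 1 => ((f x).imI : ℍ) | 2 => ((f x).imJ : ℍ) | 3 => ((f x).imK : ℍ)

/-- ‖𝓕{f}(ξ)‖_Q := √(Σ_m |𝓕{f_m}(ξ)|_Q²). -/
def QnormF (f : ℝ × ℝ → ℍ) (ξ : ℝ × ℝ) : ℝ :=
  Real.sqrt (∑ m : Fin 4, ‖QFT (qcomp f m) ξ‖ ^ 2)

/-- A quaternion-coefficient polynomial on ℝ², given by its four real components. -/
def qpoly (c : Fin 4 → MvPolynomial (Fin 2) ℝ) (x : ℝ × ℝ) : ℍ :=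
  ⟨MvPolynomial.eval ![x.1, x.2] (c 0), MvPolynomial.eval ![x.1, x.2] (c 1),
   MvPolynomial.eval ![x.1, x.2] (c 2), MvPolynomial.eval ![x.1, x.2] (c 3)⟩


/-! The one-dimensional Fourier transform sends `xⁿ e^{-πx²}` to `(-i)ⁿ Hₙ(ξ) e^{-πξ²}`, where
`H₀ = 1`, `Hₙ₊₁ = X Hₙ - Hₙ'/(2π)` is monic of degree `n`: by induction, since
`𝓕(x g) = (i/2π) (𝓕 g)'`.
The kernel `e^{-i2πξ₁x₁} · e^{-j2πξ₂x₂}` separates and a real-valued `f` commutes with every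
quaternion, so the QFT of `x₁ᵏ x₂ˡ e^{-π|x|²}` is `(-i)ᵏ (-j)ˡ Hₖ(ξ₁) Hₗ(ξ₂) e^{-π|ξ|²}`.
Summing over the monomials of `P` gives `Q = Σ_d P_d (-i)^{d₀} (-j)^{d₁} H_{d₀}(ξ₁) H_{d₁}(ξ₂)`.
Its degree is at most `deg P`, and at a top-degree monomial `d` of `P` the coefficient of `Q` is
`P_d (-i)^{d₀} (-j)^{d₁} ≠ 0`: the `H` are monic, and no other monomial of `P` reaches `ξ^d`. -/

open Complex Polynomial FourierTransform

/-- `Hₙ(ξ) = (2π)^{-n/2} Heₙ(√(2π) ξ)`, with `Heₙ` the probabilists' Hermite polynomial. -/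
def gaussHermite : ℕ → ℝ[X]
  | 0 => 1
  | n + 1 => X * gaussHermite n - C (2 * π)⁻¹ * derivative (gaussHermite n)

theorem gaussHermite_monic_and_degree_eq (n : ℕ) :
    (gaussHermite n).Monic ∧ (gaussHermite n).degree = n := by
  induction n with
  | zero => simp [gaussHermite]
  | succ n ih =>
    obtain ⟨hmon, hdeg⟩ := ih
    have hX : (X * gaussHermite n).degree = ↑(n + 1) := by
      rw [degree_mul, degree_X, hdeg, add_comm]; rfl
    have hlt :
        (C (2 * π)⁻¹ * derivative (gaussHermite n)).degree < (X * gaussHermite n).degree := by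
      rw [degree_C_mul (by positivity), hX]
      exact (degree_derivative_lt hmon.ne_zero).trans_le (by rw [hdeg]; exact_mod_cast n.le_succ)
    exact ⟨(monic_X.mul hmon).sub_of_left hlt,
      by rw [gaussHermite, degree_sub_eq_left_of_degree_lt hlt, hX]⟩

theorem monic_gaussHermite (n : ℕ) : (gaussHermite n).Monic :=
  (gaussHermite_monic_and_degree_eq n).1

theorem natDegree_gaussHermite (n : ℕ) : (gaussHermite n).natDegree = n :=
  natDegree_eq_of_degree_eq_some (gaussHermite_monic_and_degree_eq n).2

theorem coeff_gaussHermite_self (n : ℕ) : (gaussHermite n).coeff n = 1 := by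
  simpa [natDegree_gaussHermite] using (monic_gaussHermite n).coeff_natDegree

theorem coeff_gaussHermite_of_lt {n k : ℕ} (h : n < k) : (gaussHermite n).coeff k = 0 :=
  coeff_eq_zero_of_natDegree_lt (by rwa [natDegree_gaussHermite])

def gaussianMonomial (n : ℕ) (x : ℝ) : ℝ := x ^ n * rexp (-(π * x ^ 2))

theorem integrable_gaussianMonomial (n : ℕ) : Integrable (gaussianMonomial n) := by
  have := integrable_rpow_mul_exp_neg_mul_sq pi_pos (s := n)
    (by linarith [(n.cast_nonneg : (0 : ℝ) ≤ n)])
  simp only [Real.rpow_natCast, neg_mul] at this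
  exact this

theorem hasDerivAt_fourier_gaussianMonomial (n : ℕ) (w : ℝ) :
    HasDerivAt (𝓕 fun x : ℝ ↦ (gaussianMonomial n x : ℂ))
      (-2 * π * I * 𝓕 (fun x : ℝ ↦ (gaussianMonomial (n + 1) x : ℂ)) w) w := by
  have hsucc : (fun x : ℝ ↦ x • (gaussianMonomial n x : ℂ)) =
      fun x ↦ (gaussianMonomial (n + 1) x : ℂ) := by
    ext x
    simp only [gaussianMonomial, pow_succ, real_smul, ofReal_mul, ofReal_pow]
    ring
  refine (Real.hasDerivAt_fourier (integrable_gaussianMonomial n).ofReal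
    (hsucc ▸ (integrable_gaussianMonomial (n + 1)).ofReal) w).congr_deriv ?_
  rw [Real.fourier_real_eq, Real.fourier_real_eq, ← integral_const_mul]
  congr 1; ext x
  simp only [Circle.smul_def, smul_eq_mul, gaussianMonomial]
  push_cast; ring

theorem fourier_gaussianMonomial (n : ℕ) (w : ℝ) :
    𝓕 (fun x : ℝ ↦ (gaussianMonomial n x : ℂ)) w =
      (-I) ^ n * ((gaussHermite n).eval w * rexp (-(π * w ^ 2)) : ℝ) := by
  induction n generalizing w with
  | zero =>
    have hgauss : (fun x : ℝ ↦ (gaussianMonomial 0 x : ℂ)) =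
        fun x : ℝ ↦ cexp (-π * 1 * x ^ 2) := by
      ext x; simp [gaussianMonomial, Complex.ofReal_exp]
    rw [hgauss, fourier_gaussian_pi (by simp)]
    simp [gaussHermite, Complex.ofReal_exp]
  | succ n ih =>
    have hderiv : HasDerivAt (𝓕 fun x : ℝ ↦ (gaussianMonomial n x : ℂ))
        ((-I) ^ n * (((gaussHermite n).derivative.eval w - 2 * π * w * (gaussHermite n).eval w) *
          rexp (-(π * w ^ 2)) : ℝ)) w := by
      rw [funext ih]
      have hgauss : HasDerivAt (fun s : ℝ ↦ rexp (-(π * s ^ 2)))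
          (rexp (-(π * w ^ 2)) * (-(π * (2 * w)))) w := by
        simpa using ((hasDerivAt_pow 2 w).const_mul π).neg.exp
      refine ((((gaussHermite n).hasDerivAt w).mul hgauss).ofReal_comp.const_mul
        ((-I) ^ n)).congr_deriv ?_
      push_cast; ring
    have hπ : (-2 * π * I : ℂ) ≠ 0 := by simp [pi_ne_zero]
    apply mul_left_cancel₀ hπ
    rw [(hasDerivAt_fourier_gaussianMonomial n w).unique hderiv, gaussHermite]
    simp only [eval_sub, eval_mul, eval_X, eval_C, pow_succ]
    push_cast
    field_simp
    rw [I_sq]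
    ring

theorem Qi_mul_Qi : Qi * Qi = -1 := by
  ext <;> simp [Quaternion.re_mul, Quaternion.imI_mul, Quaternion.imJ_mul, Quaternion.imK_mul,
    Quaternion.re_one, Quaternion.imI_one, Quaternion.imJ_one, Quaternion.imK_one] <;> simp [Qi]

theorem Qj_mul_Qj : Qj * Qj = -1 := by
  ext <;> simp [Quaternion.re_mul, Quaternion.imI_mul, Quaternion.imJ_mul, Quaternion.imK_mul,
    Quaternion.re_one, Quaternion.imI_one, Quaternion.imJ_one, Quaternion.imK_one] <;> simp [Qj]

def embedI : ℂ →ₐ[ℝ] ℍ := Complex.lift ⟨Qi, Qi_mul_Qi⟩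

def embedJ : ℂ →ₐ[ℝ] ℍ := Complex.lift ⟨Qj, Qj_mul_Qj⟩

theorem embedI_I : embedI I = Qi := by simp [embedI]

theorem embedJ_I : embedJ I = Qj := by simp [embedJ]

theorem embedI_exp_mul_I (θ : ℝ) : embedI (cexp (θ * I)) = expI θ := by
  rw [embedI, Complex.lift_apply, Complex.liftAux_apply, Complex.exp_ofReal_mul_I_re,
    Complex.exp_ofReal_mul_I_im]
  ext <;> simp [Quaternion.re_smul] <;> simp [expI, Qi]

theorem embedJ_exp_mul_I (θ : ℝ) : embedJ (cexp (θ * I)) = expJ θ := by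
  rw [embedJ, Complex.lift_apply, Complex.liftAux_apply, Complex.exp_ofReal_mul_I_re,
    Complex.exp_ofReal_mul_I_im]
  ext <;> simp [Quaternion.re_smul] <;> simp [expJ, Qj]

theorem embedI_fourierChar (t : ℝ) : embedI (𝐞 t) = expI (2 * π * t) := by
  rw [Real.fourierChar_apply, embedI_exp_mul_I]

theorem embedJ_fourierChar (t : ℝ) : embedJ (𝐞 t) = expJ (2 * π * t) := by
  rw [Real.fourierChar_apply, embedJ_exp_mul_I]

theorem continuous_expI : Continuous expI := by
  simp_rw [funext fun θ ↦ (embedI_exp_mul_I θ).symm]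
  exact embedI.toLinearMap.continuous_of_finiteDimensional.comp (by fun_prop)

theorem continuous_expJ : Continuous expJ := by
  simp_rw [funext fun θ ↦ (embedJ_exp_mul_I θ).symm]
  exact embedJ.toLinearMap.continuous_of_finiteDimensional.comp (by fun_prop)

theorem norm_expI (θ : ℝ) : ‖expI θ‖ = 1 := by
  have h : ‖expI θ‖ * ‖expI θ‖ = 1 := by
    rw [← Quaternion.normSq_eq_norm_mul_self, Quaternion.normSq_def']
    simp [expI]
  nlinarith [norm_nonneg (expI θ)]

theorem norm_expJ (θ : ℝ) : ‖expJ θ‖ = 1 := by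
  have h : ‖expJ θ‖ * ‖expJ θ‖ = 1 := by
    rw [← Quaternion.normSq_eq_norm_mul_self, Quaternion.normSq_def']
    simp [expJ]
  nlinarith [norm_nonneg (expJ θ)]

theorem integrable_QFT_integrand {F : ℝ × ℝ → ℍ} (hF : Integrable F) (ξ : ℝ × ℝ) :
    Integrable fun x : ℝ × ℝ ↦
      expI (-(2 * π * ξ.1 * x.1)) * F x * expJ (-(2 * π * ξ.2 * x.2)) :=
  (hF.bdd_mul (c := 1) (continuous_expI.comp (by fun_prop)).aestronglyMeasurable
    (.of_forall fun _ ↦ (norm_expI _).le)).mul_bdd (c := 1)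
    (continuous_expJ.comp (by fun_prop)).aestronglyMeasurable
    (.of_forall fun _ ↦ (norm_expJ _).le)

theorem QFT_finsetSum_smul {ι : Type*} (s : Finset ι) (a : ι → ℝ) {F : ι → ℝ × ℝ → ℍ}
    (hF : ∀ i ∈ s, Integrable (F i)) (ξ : ℝ × ℝ) :
    QFT (fun x ↦ ∑ i ∈ s, a i • F i x) ξ = ∑ i ∈ s, a i • QFT (F i) ξ := by
  unfold QFT
  simp_rw [Finset.mul_sum, Finset.sum_mul, mul_smul_comm, smul_mul_assoc]
  rw [integral_finsetSum s fun i hi ↦ ?_]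
  · simp_rw [integral_smul]
  · exact (integrable_QFT_integrand (hF i hi) ξ).smul (a i)

theorem integrable_fourierChar_smul_ofReal {g : ℝ → ℝ} (hg : Integrable g) (w : ℝ) :
    Integrable fun v : ℝ ↦ 𝐞 (-(v * w)) • (g v : ℂ) := by
  have := (Real.fourierIntegral_convergent_iff (V := ℝ) (E := ℂ) (f := fun v ↦ (g v : ℂ)) w).2
    hg.ofReal
  simpa [mul_comm] using this

theorem QFT_ofReal_mul (g h : ℝ → ℝ) (hg : Integrable g) (hh : Integrable h) (ξ : ℝ × ℝ) :
    QFT (fun x ↦ ((g x.1 * h x.2 : ℝ) : ℍ)) ξ =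
      embedI (𝓕 (fun t : ℝ ↦ (g t : ℂ)) ξ.1) * embedJ (𝓕 (fun t : ℝ ↦ (h t : ℂ)) ξ.2) := by
  let B : ℂ →L[ℝ] ℂ →L[ℝ] ℍ := (ContinuousLinearMap.mul ℝ ℍ).bilinearComp
    (LinearMap.toContinuousLinearMap embedI.toLinearMap)
    (LinearMap.toContinuousLinearMap embedJ.toLinearMap)
  have hfubini := integral_prod_bilin B (integrable_fourierChar_smul_ofReal hg ξ.1)
    (integrable_fourierChar_smul_ofReal hh ξ.2)
  rw [← Measure.volume_eq_prod] at hfubini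
  rw [Real.fourier_real_eq, Real.fourier_real_eq]
  refine Eq.trans (integral_congr_ae (.of_forall fun x ↦ ?_)) hfubini
  simp only [B, ContinuousLinearMap.bilinearComp_apply, ContinuousLinearMap.mul_apply',
    LinearMap.coe_toContinuousLinearMap', AlgHom.toLinearMap_apply, Circle.smul_def, smul_eq_mul,
    map_mul, embedI_fourierChar, embedJ_fourierChar, AlgHom.map_coe_real_complex,
    Quaternion.algebraMap_def, Quaternion.coe_mul, mul_neg]
  rw [mul_comm x.1 ξ.1, mul_comm x.2 ξ.2, ← Quaternion.coe_commutes (h x.2) (expJ _)]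
  simp only [mul_assoc]

theorem QFT_gaussianMonomial (k l : ℕ) (ξ : ℝ × ℝ) :
    QFT (fun x ↦ ((gaussianMonomial k x.1 * gaussianMonomial l x.2 : ℝ) : ℍ)) ξ =
      ((gaussHermite k).eval ξ.1 * (gaussHermite l).eval ξ.2) • ((-Qi) ^ k * (-Qj) ^ l) *
        ((rexp (-(π * (ξ.1 ^ 2 + ξ.2 ^ 2))) : ℝ) : ℍ) := by
  rw [QFT_ofReal_mul _ _ (integrable_gaussianMonomial k) (integrable_gaussianMonomial l),
    fourier_gaussianMonomial, fourier_gaussianMonomial]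
  simp only [map_mul, map_pow, map_neg, embedI_I, embedJ_I, AlgHom.map_coe_real_complex,
    Quaternion.algebraMap_def, Quaternion.mul_coe_eq_smul, smul_mul_assoc, mul_smul_comm, smul_smul]
  congr 1
  rw [mul_add, neg_add, Real.exp_add]
  ring

theorem coeff_aeval_X_zero_mul_aeval_X_one {R : Type*} [CommSemiring R] (p q : R[X])
    (d : Fin 2 →₀ ℕ) :
    (aeval (MvPolynomial.X 0) p * aeval (MvPolynomial.X 1) q : MvPolynomial (Fin 2) R).coeff d =
      p.coeff (d 0) * q.coeff (d 1) := by
  induction p using Polynomial.induction_on' with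
  | add p₁ p₂ h₁ h₂ =>
    simp only [map_add, add_mul, MvPolynomial.coeff_add, coeff_add, h₁, h₂]
  | monomial k a =>
    induction q using Polynomial.induction_on' with
    | add q₁ q₂ h₁ h₂ =>
      simp only [map_add, mul_add, MvPolynomial.coeff_add, coeff_add, h₁, h₂]
    | monomial l b =>
      have hd : Finsupp.single 0 k + Finsupp.single 1 l = d ↔ k = d 0 ∧ l = d 1 := by
        constructor
        · rintro rfl; simp
        · rintro ⟨rfl, rfl⟩; ext i; fin_cases i <;> simp
      simp only [aeval_monomial, MvPolynomial.algebraMap_eq, MvPolynomial.X_pow_eq_monomial,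
        MvPolynomial.C_mul_monomial, MvPolynomial.monomial_mul, MvPolynomial.coeff_monomial,
        Polynomial.coeff_monomial, hd]
      split_ifs <;> simp_all

theorem Finsupp.sum_id_fin_two (e : Fin 2 →₀ ℕ) : (e.sum fun _ n ↦ n) = e 0 + e 1 := by
  rw [Finsupp.sum_fintype _ _ fun _ ↦ rfl, Fin.sum_univ_two]

def gaussHermite₂ (d : Fin 2 →₀ ℕ) : MvPolynomial (Fin 2) ℝ :=
  aeval (MvPolynomial.X 0) (gaussHermite (d 0)) * aeval (MvPolynomial.X 1) (gaussHermite (d 1))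

theorem eval_gaussHermite₂ (d : Fin 2 →₀ ℕ) (ξ : ℝ × ℝ) :
    MvPolynomial.eval ![ξ.1, ξ.2] (gaussHermite₂ d) =
      (gaussHermite (d 0)).eval ξ.1 * (gaussHermite (d 1)).eval ξ.2 := by
  change MvPolynomial.aeval ![ξ.1, ξ.2] (gaussHermite₂ d) = _
  rw [gaussHermite₂, map_mul, ← Polynomial.aeval_algHom_apply, ← Polynomial.aeval_algHom_apply]
  simp

def quatComponents {ι : Type*} (s : Finset ι) (u : ι → ℍ) (p : ι → MvPolynomial (Fin 2) ℝ) :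
    Fin 4 → MvPolynomial (Fin 2) ℝ :=
  fun m ↦ ∑ i ∈ s, Quaternion.equivTuple ℝ (u i) m • p i

theorem qpoly_quatComponents {ι : Type*} (s : Finset ι) (u : ι → ℍ)
    (p : ι → MvPolynomial (Fin 2) ℝ) (ξ : ℝ × ℝ) :
    qpoly (quatComponents s u p) ξ = ∑ i ∈ s, MvPolynomial.eval ![ξ.1, ξ.2] (p i) • u i := by
  apply Quaternion.linearIsometryEquivTuple.injective
  rw [map_sum]
  ext m
  simp only [map_smul]
  fin_cases m <;> simp [qpoly, quatComponents, Finset.sum_apply, mul_comm] <;> rfl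

def qftUnit (d : Fin 2 →₀ ℕ) : ℍ := (-Qi) ^ d 0 * (-Qj) ^ d 1

theorem qftUnit_ne_zero (d : Fin 2 →₀ ℕ) : qftUnit d ≠ 0 := by
  have hQi : Qi ≠ 0 := fun h ↦ by simpa [h] using Qi_mul_Qi
  have hQj : Qj ≠ 0 := fun h ↦ by simpa [h] using Qj_mul_Qj
  exact mul_ne_zero (pow_ne_zero _ (neg_ne_zero.2 hQi)) (pow_ne_zero _ (neg_ne_zero.2 hQj))

def qftPoly (P : MvPolynomial (Fin 2) ℝ) : Fin 4 → MvPolynomial (Fin 2) ℝ :=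
  quatComponents P.support qftUnit fun d ↦ P.coeff d • gaussHermite₂ d

theorem coeff_qftPoly (P : MvPolynomial (Fin 2) ℝ) (m : Fin 4) (e : Fin 2 →₀ ℕ) :
    (qftPoly P m).coeff e = ∑ d ∈ P.support, Quaternion.equivTuple ℝ (qftUnit d) m *
      (P.coeff d * ((gaussHermite (d 0)).coeff (e 0) * (gaussHermite (d 1)).coeff (e 1))) := by
  simp [qftPoly, quatComponents, MvPolynomial.coeff_sum, gaussHermite₂,
    coeff_aeval_X_zero_mul_aeval_X_one]

theorem totalDegree_qftPoly_le (P : MvPolynomial (Fin 2) ℝ) (m : Fin 4) :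
    (qftPoly P m).totalDegree ≤ P.totalDegree := by
  refine Finset.sup_le fun e he ↦ ?_
  rw [MvPolynomial.mem_support_iff, coeff_qftPoly] at he
  obtain ⟨d, hd, hne⟩ := Finset.exists_ne_zero_of_sum_ne_zero he
  have h0 : e 0 ≤ d 0 := by
    by_contra! h; simp [coeff_gaussHermite_of_lt h] at hne
  have h1 : e 1 ≤ d 1 := by
    by_contra! h; simp [coeff_gaussHermite_of_lt h] at hne
  have hdeg := MvPolynomial.le_totalDegree hd
  rw [Finsupp.sum_id_fin_two] at hdeg ⊢
  omega

theorem coeff_qftPoly_of_sum_eq_totalDegree (P : MvPolynomial (Fin 2) ℝ) (m : Fin 4)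
    {d : Fin 2 →₀ ℕ} (hd : d ∈ P.support) (hdeg : (d.sum fun _ n ↦ n) = P.totalDegree) :
    (qftPoly P m).coeff d = Quaternion.equivTuple ℝ (qftUnit d) m * P.coeff d := by
  rw [coeff_qftPoly, Finset.sum_eq_single_of_mem d hd]
  · simp [coeff_gaussHermite_self]
  intro d' hd' hne
  have hle := MvPolynomial.le_totalDegree hd'
  rw [← hdeg, Finsupp.sum_id_fin_two, Finsupp.sum_id_fin_two] at hle
  rcases lt_or_ge (d' 0) (d 0) with h0 | h0
  · simp [coeff_gaussHermite_of_lt h0]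
  rcases lt_or_ge (d' 1) (d 1) with h1 | h1
  · simp [coeff_gaussHermite_of_lt h1]
  exact absurd (Finsupp.ext fun i ↦ by fin_cases i <;> simp <;> omega) hne

theorem sup_totalDegree_qftPoly (P : MvPolynomial (Fin 2) ℝ) :
    (Finset.univ.sup fun m ↦ (qftPoly P m).totalDegree) = P.totalDegree := by
  refine le_antisymm (Finset.sup_le fun m _ ↦ totalDegree_qftPoly_le P m) ?_
  rcases P.support.eq_empty_or_nonempty with hP | hP
  · simp [MvPolynomial.totalDegree, hP]
  obtain ⟨d, hd, hdeg⟩ := P.support.exists_mem_eq_sup hP fun e ↦ e.sum fun _ n ↦ n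
  obtain ⟨m, hm⟩ : ∃ m, Quaternion.equivTuple ℝ (qftUnit d) m ≠ 0 := by
    by_contra! h
    exact qftUnit_ne_zero d <|
      (Quaternion.equivTuple ℝ).injective (funext fun i ↦ (h i).trans (by fin_cases i <;> rfl))
  have hcoeff : (qftPoly P m).coeff d ≠ 0 := by
    rw [coeff_qftPoly_of_sum_eq_totalDegree P m hd hdeg.symm]
    exact mul_ne_zero hm (MvPolynomial.mem_support_iff.1 hd)
  calc P.totalDegree = d.sum fun _ n ↦ n := hdeg
    _ ≤ (qftPoly P m).totalDegree :=
      MvPolynomial.le_totalDegree (MvPolynomial.mem_support_iff.2 hcoeff)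
    _ ≤ _ := Finset.le_sup (f := fun m ↦ (qftPoly P m).totalDegree) (Finset.mem_univ m)

theorem eval_mul_gaussian (P : MvPolynomial (Fin 2) ℝ) (x : ℝ × ℝ) :
    MvPolynomial.eval ![x.1, x.2] P * rexp (-(π * (x.1 ^ 2 + x.2 ^ 2))) =
      ∑ d ∈ P.support, P.coeff d * (gaussianMonomial (d 0) x.1 * gaussianMonomial (d 1) x.2) := by
  rw [MvPolynomial.eval_eq', Finset.sum_mul]
  refine Finset.sum_congr rfl fun d _ ↦ ?_
  simp only [Fin.prod_univ_two, gaussianMonomial, Matrix.cons_val_zero, Matrix.cons_val_one,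
    mul_add, neg_add, Real.exp_add]
  ring

theorem integrable_gaussianMonomial_mul (k l : ℕ) :
    Integrable fun x : ℝ × ℝ ↦ ((gaussianMonomial k x.1 * gaussianMonomial l x.2 : ℝ) : ℍ) := by
  have h := (integrable_gaussianMonomial k).mul_prod (integrable_gaussianMonomial l)
  rw [← Measure.volume_eq_prod] at h
  refine (h.smul_const (1 : ℍ)).congr (.of_forall fun x ↦ ?_)
  exact (Algebra.algebraMap_eq_smul_one _).symm

/-- QFT of a polynomial times a Gaussian is a quaternion polynomial times the Gaussian. -/
theorem qft_poly_gaussian (P : MvPolynomial (Fin 2) ℝ)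
    (f : ℝ × ℝ → ℝ)
    (hf : ∀ x : ℝ × ℝ, f x = MvPolynomial.eval ![x.1, x.2] P * Real.exp (-(π * (x.1 ^ 2 + x.2 ^ 2)))) :
    ∃ c : Fin 4 → MvPolynomial (Fin 2) ℝ,
      (Finset.univ.sup fun i => (c i).totalDegree) = P.totalDegree ∧
      ∀ ξ : ℝ × ℝ, QFT (fun x => ((f x : ℝ) : ℍ)) ξ =
        qpoly c ξ * ((Real.exp (-(π * (ξ.1 ^ 2 + ξ.2 ^ 2))) : ℝ) : ℍ) := by
  refine ⟨qftPoly P, sup_totalDegree_qftPoly P, fun ξ ↦ ?_⟩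
  have hf_sum : (fun x ↦ ((f x : ℝ) : ℍ)) = fun x ↦ ∑ d ∈ P.support,
      P.coeff d • ((gaussianMonomial (d 0) x.1 * gaussianMonomial (d 1) x.2 : ℝ) : ℍ) := by
    ext1 x
    rw [hf, eval_mul_gaussian]
    simp_rw [Quaternion.smul_coe]
    exact map_sum (algebraMap ℝ ℍ) _ _
  rw [hf_sum, QFT_finsetSum_smul _ _ fun d _ ↦ integrable_gaussianMonomial_mul _ _, qftPoly,
    qpoly_quatComponents, Finset.sum_mul]
  refine Finset.sum_congr rfl fun d _ ↦ ?_
  rw [QFT_gaussianMonomial, MvPolynomial.smul_eval, eval_gaussHermite₂, smul_mul_assoc,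
    smul_mul_assoc, smul_smul, qftUnit]
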